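/- Assume P is non-degenerate (μ ≠ ν implies μP^n ≠ νP^n for all n). Let μ ≠ μ′ be two translation-invariant probability measures with relative entropy density s(μ|μ′) = 0. Then for every n ∈ N, μ′P^n does not satisfy GCB(C) for any C ≥ 0. -/

import Mathlib

open MeasureTheory Filter
open scoped ENNReal

/-- Spatial configurations: spins (encoded as `Bool`, `true` = +1) indexed by `ι`. -/
abbrev Config (ι : Type*) := ι → Bool

/-- The lattice `ℤ^d`. -/
abbrev Site (d : ℕ) := Fin d → ℤ

/-- Spin value `±1` of a Boolean. -/
noncomputable def spin (b : Bool) : ℝ := if b then 1 else -1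

/-- Flip the spin of `σ` at site `x`. -/
def flipAt {ι : Type*} [DecidableEq ι] (σ : Config ι) (x : ι) : Config ι :=
  Function.update σ x (!σ x)

/-- Oscillation `δ_x f = sup_σ (f(σ^{(x)}) - f(σ))`. -/
noncomputable def osc {ι : Type*} [DecidableEq ι] (f : Config ι → ℝ) (x : ι) : ℝ :=
  ⨆ σ : Config ι, (f (flipAt σ x) - f σ)

/-- `‖δ f‖₂²  = ∑_x (δ_x f)²`. -/
noncomputable def oscNormSq {ι : Type*} [DecidableEq ι] (f : Config ι → ℝ) : ℝ :=
  ∑' x : ι, osc f x ^ 2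

/-- `‖δ f‖₁ = ∑_x δ_x f`. -/
noncomputable def oscNorm1 {ι : Type*} [DecidableEq ι] (f : Config ι → ℝ) : ℝ :=
  ∑' x : ι, osc f x

/-- `f` depends only on the coordinates in `Λ` (i.e. `f` is `F_Λ`-measurable). -/
def LocalOn {ι : Type*} (Λ : Finset ι) (f : Config ι → ℝ) : Prop :=
  ∀ σ τ : Config ι, (∀ x ∈ Λ, σ x = τ x) → f σ = f τ

/-- `f` is a local function. -/
def IsLocal {ι : Type*} (f : Config ι → ℝ) : Prop := ∃ Λ : Finset ι, LocalOn Λ f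

/-- Gaussian concentration bound with constant `C`:
`log ∫ e^{f - ∫ f dμ} dμ ≤ (C/2) ‖δ f‖₂²` for every local function `f`. -/
def GCB {ι : Type*} [DecidableEq ι] (μ : Measure (Config ι)) (C : ℝ) : Prop :=
  ∀ f : Config ι → ℝ, IsLocal f →
    Real.log (∫ σ, Real.exp (f σ - ∫ τ, f τ ∂μ) ∂μ) ≤ C / 2 * oscNormSq f

/-- The cylinder set of configurations agreeing with `b` on `Λ`. -/
def cyl {ι : Type*} (Λ : Finset ι) (b : ι → Bool) : Set (Config ι) :=
  {σ | ∀ x ∈ Λ, σ x = b x}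

/-- `h_x(η) = ∑_{A ⋐ ℤ^d} r_A η_{A+x}`. -/
noncomputable def hfun {d : ℕ} (r : Finset (Site d) → ℝ) (x : Site d)
    (η : Config (Site d)) : ℝ :=
  ∑' A : Finset (Site d), r A * ∏ y ∈ A, spin (η (y + x))

/-- `p_x(η) = ½ (1 + η_x h_x(η))`, the probability that the new spin at `x` is `+1`. -/
noncomputable def pPlus {d : ℕ} (r : Finset (Site d) → ℝ) (x : Site d)
    (η : Config (Site d)) : ℝ :=
  (1 + spin (η x) * hfun r x η) / 2

/-- A (translation-invariant) probabilistic cellular automaton on `{-1,+1}^{ℤ^d}`: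
given the configuration `η`, the next configuration is distributed as the product
measure with marginals `p_x(η)` at site `x`. -/
structure PCA (d : ℕ) where
  r : Finset (Site d) → ℝ
  summable_r : Summable fun A => |r A|
  hbound : ∀ (x : Site d) (η : Config (Site d)), |hfun r x η| ≤ 1
  ker : Config (Site d) → Measure (Config (Site d))
  ker_meas : Measurable ker
  ker_prob : ∀ η, IsProbabilityMeasure (ker η)
  ker_marginal : ∀ (η : Config (Site d)) (Λ : Finset (Site d)) (b : Site d → Bool),
    ker η (cyl Λ b) =
      ∏ x ∈ Λ, ENNReal.ofReal (if b x then pPlus r x η else 1 - pPlus r x η)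

/-- The transition operator `P` acting on functions: `Pf(η) = ∫ f(σ) p(dσ|η)`. -/
noncomputable def Pop {d : ℕ} (P : PCA d) (f : Config (Site d) → ℝ)
    (η : Config (Site d)) : ℝ :=
  ∫ σ, f σ ∂(P.ker η)

/-- The transition operator acting on measures: `μP`. -/
noncomputable def Pmeas {d : ℕ} (P : PCA d) (μ : Measure (Config (Site d))) :
    Measure (Config (Site d)) :=
  μ.bind P.ker

/-- `ψ(x) = ∑_{A ∋ x} |r_A|`. -/
noncomputable def psi {d : ℕ} (P : PCA d) (x : Site d) : ℝ :=
  ∑' A : Finset (Site d), if x ∈ A then |P.r A| else 0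

/-- `‖ψ‖₁ = ∑_{A ⋐ ℤ^d} |A| |r_A|`. -/
noncomputable def psiNorm1 {d : ℕ} (P : PCA d) : ℝ :=
  ∑' A : Finset (Site d), (A.card : ℝ) * |P.r A|

/-- The contraction coefficient `κ = ‖ψ‖₁² = (∑_A |A||r_A|)²`. -/
noncomputable def kappa {d : ℕ} (P : PCA d) : ℝ := psiNorm1 P ^ 2

/-- The shift (translation) of a configuration by `a ∈ ℤ^d`. -/
def shift {d : ℕ} (a : Site d) (σ : Config (Site d)) : Config (Site d) :=
  fun x => σ (x + a)

/-- Translation invariance of a measure on `{-1,+1}^{ℤ^d}`. -/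
def TransInv {d : ℕ} (μ : Measure (Config (Site d))) : Prop :=
  ∀ a : Site d, μ.map (shift a) = μ

/-- The cube `C_n = [-n,n]^d ∩ ℤ^d` as a finite set of sites. -/
noncomputable def cube (d n : ℕ) : Finset (Site d) :=
  Fintype.piFinset fun _ : Fin d => Finset.Icc (-(n : ℤ)) (n : ℤ)

/-- The relative entropy `S_Λ(ν|μ)` of the `Λ`-marginals (in `[0,∞]`,
`∞` unless `ν_Λ ≪ μ_Λ`). -/
noncomputable def relEntVol {ι : Type*} [DecidableEq ι]
    (ν μ : Measure (Config ι)) (Λ : Finset ι) : ℝ≥0∞ := by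
  classical
  exact
    if ∀ b : ι → Bool, μ (cyl Λ b) = 0 → ν (cyl Λ b) = 0 then
      ENNReal.ofReal (∑ b : Λ → Bool,
        (ν (cyl Λ fun x => if h : x ∈ Λ then b ⟨x, h⟩ else false)).toReal *
          Real.log ((ν (cyl Λ fun x => if h : x ∈ Λ then b ⟨x, h⟩ else false)).toReal /
            (μ (cyl Λ fun x => if h : x ∈ Λ then b ⟨x, h⟩ else false)).toReal))
    else ⊤

/-- The lower relative entropy density `s_*(ν|μ) = liminf_n S_{C_n}(ν|μ)/|C_n|`. -/
noncomputable def sStar {d : ℕ} (ν μ : Measure (Config (Site d))) : ℝ≥0∞ :=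
  Filter.liminf (fun n : ℕ => relEntVol ν μ (cube d n) / ((cube d n).card : ℝ≥0∞))
    Filter.atTop

/-!
Non-degeneracy gives `μPⁿ ≠ μ'Pⁿ`, hence a local `g` with `∫ g d(μPⁿ) - ∫ g d(μ'Pⁿ) = Δ > 0`.
Test the Gaussian concentration bound of `ν' = μ'Pⁿ` on the ergodic sums
`f_m = λ ∑_{x ∈ C_m} g ∘ θ_x`: since `‖δ f_m‖₂² ≤ λ² |C_m| ‖δ g‖₁²`, the Donsker–Varadhan
functional `∫ f_m d(μPⁿ) - log ∫ e^{f_m} dν'` is at least `|C_m| (λΔ - Cλ²‖δ g‖₁²/2)`, which is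
`≥ c |C_m|` for small `λ > 0`. Pulling `f_m` back through `Pⁿ` (Jensen for `exp`, and
quasilocality: `Pⁿ f_m` is uniformly close to a function local in a slightly larger cube) gives the
same linear lower bound for the relative entropy of `μ` and `μ'` on cubes, contradicting zero
entropy density.
-/

open ProbabilityTheory

section LocalFunctions

variable {ι : Type*}

lemma measurableSet_cyl (Λ : Finset ι) (b : ι → Bool) : MeasurableSet (cyl Λ b) := by
  have : cyl Λ b = ⋂ x ∈ (Λ : Set ι), (fun σ : Config ι => σ x) ⁻¹' {b x} := by
    ext σ; simp [cyl]
  rw [this]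
  exact .biInter Λ.countable_toSet fun x _ => measurable_pi_apply x (measurableSet_singleton _)

lemma LocalOn.mono {Λ Λ' : Finset ι} {f : Config ι → ℝ} (h : LocalOn Λ f) (hΛ : Λ ⊆ Λ') :
    LocalOn Λ' f :=
  fun σ τ hστ => h σ τ fun x hx => hστ x (hΛ hx)

variable [DecidableEq ι]

/-- `relEntVol` labels the cylinders over `Λ` by these configurations. -/
def extendByFalse (Λ : Finset ι) (b : Λ → Bool) : Config ι :=
  fun x => if h : x ∈ Λ then b ⟨x, h⟩ else false

def truncate (Λ : Finset ι) (σ : Config ι) : Config ι :=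
  extendByFalse Λ (Λ.restrict σ)

lemma mem_cyl_extendByFalse {Λ : Finset ι} {b : Λ → Bool} {σ : Config ι} :
    σ ∈ cyl Λ (extendByFalse Λ b) ↔ Λ.restrict σ = b := by
  simp only [cyl, extendByFalse, funext_iff, Subtype.forall, Finset.restrict]
  exact forall₂_congr fun x hx => by simp [hx]

lemma truncate_apply_of_mem {Λ : Finset ι} {x : ι} (hx : x ∈ Λ) (σ : Config ι) :
    truncate Λ σ x = σ x := by
  simp [truncate, extendByFalse, hx]

lemma pairwise_disjoint_cyl_extendByFalse (Λ : Finset ι) :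
    Pairwise (Function.onFun Disjoint fun b : Λ → Bool => cyl Λ (extendByFalse Λ b)) :=
  fun _ _ hb => Set.disjoint_left.2 fun _ h h' =>
    hb ((mem_cyl_extendByFalse.1 h).symm.trans (mem_cyl_extendByFalse.1 h'))

lemma sum_measure_cyl_extendByFalse (μ : Measure (Config ι)) [IsProbabilityMeasure μ]
    (Λ : Finset ι) : ∑ b : Λ → Bool, μ (cyl Λ (extendByFalse Λ b)) = 1 := by
  have hcover : (⋃ b : Λ → Bool, cyl Λ (extendByFalse Λ b)) = Set.univ :=
    Set.eq_univ_of_forall fun σ => Set.mem_iUnion.2 ⟨_, mem_cyl_extendByFalse.2 rfl⟩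
  rw [← tsum_fintype (L := SummationFilter.unconditional _),
    ← measure_iUnion (pairwise_disjoint_cyl_extendByFalse Λ) fun _ => measurableSet_cyl _ _,
    hcover, measure_univ]

lemma LocalOn.apply_truncate {Λ : Finset ι} {f : Config ι → ℝ} (h : LocalOn Λ f)
    (σ : Config ι) : f (truncate Λ σ) = f σ :=
  h _ _ fun _ hx => truncate_apply_of_mem hx σ

lemma localOn_comp_truncate (Λ : Finset ι) (f : Config ι → ℝ) :
    LocalOn Λ (f ∘ truncate Λ) := fun σ τ hστ => by
  simp only [Function.comp_apply, truncate]
  congr 2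
  exact funext fun x => hστ x x.2

lemma LocalOn.measurable {Λ : Finset ι} {f : Config ι → ℝ} (h : LocalOn Λ f) :
    Measurable f := by
  have : f = (fun b => f (extendByFalse Λ b)) ∘ Λ.restrict :=
    funext fun σ => (h.apply_truncate σ).symm
  rw [this]
  exact (measurable_of_countable _).comp (Finset.measurable_restrict Λ)

lemma LocalOn.exists_abs_le {Λ : Finset ι} {f : Config ι → ℝ} (h : LocalOn Λ f) :
    ∃ B, ∀ σ, |f σ| ≤ B :=
  ⟨∑ b : Λ → Bool, |f (extendByFalse Λ b)|, fun σ => by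
    rw [← h.apply_truncate σ]
    exact Finset.single_le_sum (f := fun b => |f (extendByFalse Λ b)|)
      (fun _ _ => abs_nonneg _) (Finset.mem_univ _)⟩

lemma LocalOn.integral_eq_sum (μ : Measure (Config ι)) [IsFiniteMeasure μ]
    {Λ : Finset ι} {f : Config ι → ℝ} (h : LocalOn Λ f) :
    ∫ σ, f σ ∂μ =
      ∑ b : Λ → Bool, f (extendByFalse Λ b) * (μ (cyl Λ (extendByFalse Λ b))).toReal := by
  have hf : f = fun σ => ∑ b : Λ → Bool,
      (cyl Λ (extendByFalse Λ b)).indicator (fun _ => f (extendByFalse Λ b)) σ := by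
    funext σ
    rw [Finset.sum_eq_single_of_mem (Λ.restrict σ) (Finset.mem_univ _),
      Set.indicator_of_mem (mem_cyl_extendByFalse.2 rfl)]
    · exact (h.apply_truncate σ).symm
    · exact fun b _ hb => Set.indicator_of_notMem (fun hσ => hb (mem_cyl_extendByFalse.1 hσ).symm) _
  conv_lhs => rw [hf]
  rw [integral_finsetSum _ fun b _ => (integrable_const _).indicator (measurableSet_cyl _ _)]
  refine Finset.sum_congr rfl fun b _ => ?_
  rw [integral_indicator_const _ (measurableSet_cyl _ _), smul_eq_mul, mul_comm, measureReal_def]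

lemma measure_ext_cyl {μ ν : Measure (Config ι)} [IsProbabilityMeasure μ]
    [IsProbabilityMeasure ν]
    (h : ∀ (Λ : Finset ι) (b : Λ → Bool),
      μ (cyl Λ (extendByFalse Λ b)) = ν (cyl Λ (extendByFalse Λ b))) :
    μ = ν := by
  refine ext_of_generate_finite (measurableCylinders fun _ : ι => Bool)
    generateFrom_measurableCylinders.symm isPiSystem_measurableCylinders ?_ (by simp)
  intro s hs
  obtain ⟨Λ, S, -, rfl⟩ := (mem_measurableCylinders s).mp hs
  have hS : cylinder Λ S = ⋃ b ∈ (Set.toFinite S).toFinset, cyl Λ (extendByFalse Λ b) := by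
    ext σ
    simp [mem_cylinder, mem_cyl_extendByFalse]
  have hdisj : Set.PairwiseDisjoint ↑(Set.toFinite S).toFinset
      fun b => cyl Λ (extendByFalse Λ b) :=
    fun b _ b' _ hb => pairwise_disjoint_cyl_extendByFalse Λ hb
  rw [hS, measure_biUnion_finset hdisj fun _ _ => measurableSet_cyl _ _,
    measure_biUnion_finset hdisj fun _ _ => measurableSet_cyl _ _]
  exact Finset.sum_congr rfl fun b _ => h Λ b

end LocalFunctions

section DonskerVaradhan

lemma sum_mul_sub_log_sum_mul_exp_le {β : Type*} [Fintype β] {p q : β → ℝ} (φ : β → ℝ)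
    (hp : ∀ b, 0 ≤ p b) (hq : ∀ b, 0 ≤ q b) (hp1 : ∑ b, p b = 1) (hq1 : ∑ b, q b = 1)
    (hpq : ∀ b, q b = 0 → p b = 0) :
    ∑ b, p b * φ b - Real.log (∑ b, q b * Real.exp (φ b)) ≤
      ∑ b, p b * Real.log (p b / q b) := by
  set Z := ∑ b, q b * Real.exp (φ b)
  have hZ : 0 < Z := by
    obtain ⟨b, hb⟩ : ∃ b, q b ≠ 0 := by
      by_contra! h
      simp [h] at hq1
    exact Finset.sum_pos' (fun b _ => mul_nonneg (hq b) (Real.exp_pos _).le)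
      ⟨b, Finset.mem_univ _, mul_pos ((hq b).lt_of_ne' hb) (Real.exp_pos _)⟩
  -- `log t ≤ t - 1` at `t = q b * exp (φ b) / (p b * Z)`, weighted by `p b`
  have key : ∀ b, p b * (φ b - Real.log (p b / q b) - Real.log Z) ≤
      q b * Real.exp (φ b) / Z - p b := by
    intro b
    rcases (hp b).eq_or_lt with h0 | hpb
    · rw [← h0, zero_mul, sub_zero]
      exact div_nonneg (mul_nonneg (hq b) (Real.exp_pos _).le) hZ.le
    have hqb : 0 < q b := (hq b).lt_of_ne fun h => hpb.ne' (hpq b h.symm)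
    have hlog : Real.log (q b * Real.exp (φ b) / (p b * Z)) =
        φ b - Real.log (p b / q b) - Real.log Z := by
      rw [Real.log_div (by positivity) (by positivity), Real.log_mul hqb.ne' (Real.exp_ne_zero _),
        Real.log_exp, Real.log_mul hpb.ne' hZ.ne', Real.log_div hpb.ne' hqb.ne']
      ring
    calc p b * (φ b - Real.log (p b / q b) - Real.log Z)
        = p b * Real.log (q b * Real.exp (φ b) / (p b * Z)) := by rw [hlog]
      _ ≤ p b * (q b * Real.exp (φ b) / (p b * Z) - 1) :=
        mul_le_mul_of_nonneg_left (Real.log_le_sub_one_of_pos (by positivity)) hpb.le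
      _ = q b * Real.exp (φ b) / Z - p b := by field_simp
  have hsum := Finset.sum_le_sum fun b (_ : b ∈ Finset.univ) => key b
  simp only [mul_sub, Finset.sum_sub_distrib, ← Finset.sum_mul, ← Finset.sum_div, hp1] at hsum
  have hZ1 : Z / Z = 1 := div_self hZ.ne'
  linarith

variable {X : Type*} [MeasurableSpace X]

/-- The functional whose supremum over `f` is the relative entropy of `μ` with respect to `ν`. -/
noncomputable def donskerVaradhan (μ ν : Measure X) (f : X → ℝ) : ℝ :=
  ∫ x, f x ∂μ - Real.log (∫ x, Real.exp (f x) ∂ν)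

lemma ofReal_donskerVaradhan_le_relEntVol {ι : Type*} [DecidableEq ι]
    (μ μ' : Measure (Config ι)) [IsProbabilityMeasure μ] [IsProbabilityMeasure μ']
    {Λ : Finset ι} {f : Config ι → ℝ} (hf : LocalOn Λ f) :
    ENNReal.ofReal (donskerVaradhan μ μ' f) ≤ relEntVol μ μ' Λ := by
  rw [relEntVol]
  split_ifs with hac
  · refine ENNReal.ofReal_le_ofReal ?_
    have hexp : LocalOn Λ fun σ => Real.exp (f σ) := fun σ τ h => congrArg Real.exp (hf σ τ h)
    have hprob : ∀ ρ : Measure (Config ι), IsProbabilityMeasure ρ →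
        ∑ b : Λ → Bool, (ρ (cyl Λ (extendByFalse Λ b))).toReal = 1 := fun ρ _ => by
      rw [← ENNReal.toReal_sum fun _ _ => measure_ne_top _ _,
        sum_measure_cyl_extendByFalse, ENNReal.toReal_one]
    have hgibbs := sum_mul_sub_log_sum_mul_exp_le (fun b => f (extendByFalse Λ b))
      (fun _ => ENNReal.toReal_nonneg) (fun _ => ENNReal.toReal_nonneg) (hprob μ ‹_›)
      (hprob μ' ‹_›) fun b hb => by
        rw [hac _ (((ENNReal.toReal_eq_zero_iff _).1 hb).resolve_right (measure_ne_top _ _)),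
          ENNReal.toReal_zero]
    rw [donskerVaradhan, hf.integral_eq_sum μ, hexp.integral_eq_sum μ']
    simp only [mul_comm (f _), mul_comm (Real.exp _)]
    exact hgibbs
  · exact le_top

end DonskerVaradhan

section MarkovOperator

variable {X : Type*} [MeasurableSpace X]

lemma integrable_of_abs_le {μ : Measure X} [IsFiniteMeasure μ] {f : X → ℝ} {B : ℝ}
    (hf : Measurable f) (hB : ∀ x, |f x| ≤ B) : Integrable f μ :=
  .of_bound hf.aestronglyMeasurable B (ae_of_all _ hB)

lemma integrable_exp_of_le {μ : Measure X} [IsFiniteMeasure μ] {f : X → ℝ} {B : ℝ}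
    (hf : Measurable f) (hB : ∀ x, f x ≤ B) : Integrable (fun x => Real.exp (f x)) μ :=
  integrable_of_abs_le (B := Real.exp B) (by fun_prop) fun x => by
    rw [abs_of_pos (Real.exp_pos _)]
    exact Real.exp_le_exp.2 (hB x)

lemma log_integral_exp_le_of_le_add {μ : Measure X} [IsProbabilityMeasure μ] {f g : X → ℝ}
    {B ε : ℝ} (hf : Measurable f) (hg : Measurable g) (hgB : ∀ x, g x ≤ B)
    (h : ∀ x, f x ≤ g x + ε) :
    Real.log (∫ x, Real.exp (f x) ∂μ) ≤ Real.log (∫ x, Real.exp (g x) ∂μ) + ε := by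
  have hfi := integrable_exp_of_le (μ := μ) hf fun x => (h x).trans (add_le_add_left (hgB x) ε)
  have hgi := integrable_exp_of_le (μ := μ) hg hgB
  rw [← Real.log_exp ε, ← Real.log_mul (integral_exp_pos hgi).ne' (Real.exp_pos ε).ne',
    ← integral_mul_const]
  refine Real.log_le_log (integral_exp_pos hfi) (integral_mono hfi (hgi.mul_const _) fun x => ?_)
  rw [← Real.exp_add]
  exact Real.exp_le_exp.2 (h x)

noncomputable def kernelOp (κ : Kernel X X) (f : X → ℝ) (x : X) : ℝ :=
  ∫ y, f y ∂κ x

variable {κ : Kernel X X} {f g : X → ℝ} {B ε : ℝ}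

lemma measurable_kernelOp (hf : Measurable f) : Measurable (kernelOp κ f) :=
  hf.stronglyMeasurable.integral_kernel.measurable

lemma measurable_kernelOp_iterate (hf : Measurable f) (n : ℕ) :
    Measurable ((kernelOp κ)^[n] f) := by
  induction n with
  | zero => exact hf
  | succ n ih => rw [Function.iterate_succ_apply']; exact measurable_kernelOp ih

variable [IsMarkovKernel κ]

lemma abs_kernelOp_le (hB : ∀ y, |f y| ≤ B) (x : X) : |kernelOp κ f x| ≤ B := by
  rw [kernelOp]
  simpa using norm_integral_le_of_norm_le_const (μ := κ x) (f := f) (ae_of_all _ hB)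

lemma abs_kernelOp_iterate_le (hB : ∀ y, |f y| ≤ B) (n : ℕ) (x : X) :
    |(kernelOp κ)^[n] f x| ≤ B := by
  induction n generalizing x with
  | zero => exact hB x
  | succ n ih => rw [Function.iterate_succ_apply']; exact abs_kernelOp_le ih x

lemma abs_kernelOp_sub_le (hf : Measurable f) (hB : ∀ y, |f y| ≤ B) (hg : Measurable g)
    (h : ∀ y, |f y - g y| ≤ ε) (x : X) : |kernelOp κ f x - kernelOp κ g x| ≤ ε := by
  have hgB : ∀ y, |g y| ≤ B + ε := fun y => by
    linarith [abs_sub_abs_le_abs_sub (g y) (f y), abs_sub_comm (f y) (g y), hB y, h y]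
  rw [kernelOp, kernelOp, ← integral_sub (integrable_of_abs_le hf hB) (integrable_of_abs_le hg hgB)]
  exact abs_kernelOp_le h x

lemma kernelOp_finsetSum {ι : Type*} (s : Finset ι) {g : ι → X → ℝ}
    (hg : ∀ i, Measurable (g i)) (hB : ∀ i y, |g i y| ≤ B) :
    kernelOp κ (fun y => ∑ i ∈ s, g i y) = fun x => ∑ i ∈ s, kernelOp κ (g i) x :=
  funext fun _ => integral_finsetSum _ fun i _ => integrable_of_abs_le (hg i) (hB i)

lemma kernelOp_iterate_finsetSum {ι : Type*} (s : Finset ι) {g : ι → X → ℝ}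
    (hg : ∀ i, Measurable (g i)) (hB : ∀ i y, |g i y| ≤ B) (n : ℕ) :
    (kernelOp κ)^[n] (fun y => ∑ i ∈ s, g i y) = fun x => ∑ i ∈ s, (kernelOp κ)^[n] (g i) x := by
  induction n generalizing g with
  | zero => rfl
  | succ n ih =>
    simp only [Function.iterate_succ_apply]
    rw [kernelOp_finsetSum s hg hB]
    exact ih (fun i => measurable_kernelOp (hg i)) fun i => abs_kernelOp_le (hB i)

lemma exp_kernelOp_le (hf : Measurable f) (hB : ∀ y, |f y| ≤ B) (x : X) :
    Real.exp (kernelOp κ f x) ≤ kernelOp κ (fun y => Real.exp (f y)) x :=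
  convexOn_exp.map_integral_le Real.continuous_exp.continuousOn isClosed_univ
    (ae_of_all _ fun _ => Set.mem_univ _) (integrable_of_abs_le hf hB)
    (integrable_exp_of_le hf fun y => (le_abs_self _).trans (hB y))

lemma integral_comp_eq_integral_kernelOp (μ : Measure X) [IsFiniteMeasure μ]
    (hf : Measurable f) (hB : ∀ y, |f y| ≤ B) :
    ∫ y, f y ∂(κ ∘ₘ μ) = ∫ x, kernelOp κ f x ∂μ := by
  rw [Measure.comp_eq_comp_const_apply, Kernel.integral_comp (integrable_of_abs_le hf hB)]
  rfl

lemma isProbabilityMeasure_iterate_comp (μ : Measure X) [IsProbabilityMeasure μ] (n : ℕ) :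
    IsProbabilityMeasure ((fun ν => κ ∘ₘ ν)^[n] μ) := by
  induction n with
  | zero => assumption
  | succ n ih => rw [Function.iterate_succ_apply']; infer_instance

lemma integral_iterate_comp (μ : Measure X) [IsFiniteMeasure μ] (hf : Measurable f)
    (hB : ∀ y, |f y| ≤ B) (n : ℕ) :
    ∫ y, f y ∂((fun ν => κ ∘ₘ ν)^[n] μ) = ∫ x, (kernelOp κ)^[n] f x ∂μ := by
  induction n generalizing μ with
  | zero => rfl
  | succ n ih =>
    rw [Function.iterate_succ_apply, ih, Function.iterate_succ_apply',
      integral_comp_eq_integral_kernelOp μ (measurable_kernelOp_iterate hf n)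
        (abs_kernelOp_iterate_le hB n)]

lemma integral_exp_kernelOp_iterate_le (μ : Measure X) [IsProbabilityMeasure μ]
    (hf : Measurable f) (hB : ∀ y, |f y| ≤ B) (n : ℕ) :
    ∫ x, Real.exp ((kernelOp κ)^[n] f x) ∂μ ≤
      ∫ y, Real.exp (f y) ∂((fun ν => κ ∘ₘ ν)^[n] μ) := by
  induction n generalizing μ with
  | zero => rfl
  | succ n ih =>
    have hg := measurable_kernelOp_iterate (κ := κ) hf n
    have hgB := abs_kernelOp_iterate_le (κ := κ) hB n
    have hexpB : ∀ y, |Real.exp ((kernelOp κ)^[n] f y)| ≤ Real.exp B := fun y => by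
      rw [abs_of_pos (Real.exp_pos _)]
      exact Real.exp_le_exp.2 ((le_abs_self _).trans (hgB y))
    rw [Function.iterate_succ_apply', Function.iterate_succ_apply]
    calc ∫ x, Real.exp (kernelOp κ ((kernelOp κ)^[n] f) x) ∂μ
        ≤ ∫ x, kernelOp κ (fun y => Real.exp ((kernelOp κ)^[n] f y)) x ∂μ :=
          integral_mono (integrable_exp_of_le (measurable_kernelOp hg) fun x =>
              (le_abs_self _).trans (abs_kernelOp_le hgB x))
            (integrable_of_abs_le (measurable_kernelOp (by fun_prop)) (abs_kernelOp_le hexpB))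
            (exp_kernelOp_le hg hgB)
      _ = ∫ y, Real.exp ((kernelOp κ)^[n] f y) ∂(κ ∘ₘ μ) :=
          (integral_comp_eq_integral_kernelOp μ (by fun_prop) hexpB).symm
      _ ≤ _ := ih _

lemma donskerVaradhan_iterate_comp_le {μ μ' : Measure X} [IsProbabilityMeasure μ]
    [IsProbabilityMeasure μ'] {F : X → ℝ} (hf : Measurable f) (hB : ∀ y, |f y| ≤ B)
    (hF : Measurable F) {n : ℕ} (hε : ∀ x, |(kernelOp κ)^[n] f x - F x| ≤ ε) :
    donskerVaradhan ((fun ν => κ ∘ₘ ν)^[n] μ) ((fun ν => κ ∘ₘ ν)^[n] μ') f - 2 * ε ≤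
      donskerVaradhan μ μ' F := by
  have hg := measurable_kernelOp_iterate (κ := κ) hf n
  have hgB := abs_kernelOp_iterate_le (κ := κ) hB n
  have hFB : ∀ x, |F x| ≤ B + ε := fun x => by
    linarith [abs_sub_abs_le_abs_sub (F x) ((kernelOp κ)^[n] f x),
      abs_sub_comm ((kernelOp κ)^[n] f x) (F x), hgB x, hε x]
  have hlin : ∫ x, (kernelOp κ)^[n] f x ∂μ ≤ ∫ x, F x ∂μ + ε := by
    have := integral_mono (g := fun x => F x + ε) (integrable_of_abs_le (μ := μ) hg hgB)
      ((integrable_of_abs_le hF hFB).add (integrable_const ε))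
      fun x => show _ ≤ F x + ε by linarith [(abs_le.1 (hε x)).2]
    rwa [integral_add (integrable_of_abs_le hF hFB) (integrable_const ε), integral_const,
      probReal_univ, one_smul] at this
  have hexp : Real.log (∫ x, Real.exp (F x) ∂μ') ≤
      Real.log (∫ x, Real.exp ((kernelOp κ)^[n] f x) ∂μ') + ε :=
    log_integral_exp_le_of_le_add hF hg (fun x => (le_abs_self _).trans (hgB x))
      fun x => by linarith [(abs_le.1 (hε x)).1]
  have hjensen : Real.log (∫ x, Real.exp ((kernelOp κ)^[n] f x) ∂μ') ≤
      Real.log (∫ y, Real.exp (f y) ∂((fun ν => κ ∘ₘ ν)^[n] μ')) :=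
    Real.log_le_log
      (integral_exp_pos (integrable_exp_of_le hg fun x => (le_abs_self _).trans (hgB x)))
      (integral_exp_kernelOp_iterate_le μ' hf hB n)
  rw [donskerVaradhan, donskerVaradhan, integral_iterate_comp μ hf hB]
  linarith

end MarkovOperator

section Oscillation

variable {ι : Type*} [DecidableEq ι] {f : Config ι → ℝ} {B : ℝ}

lemma flipAt_flipAt (σ : Config ι) (x : ι) : flipAt (flipAt σ x) x = σ := by
  simp [flipAt]

lemma sub_le_osc (hB : ∀ σ, |f σ| ≤ B) (σ : Config ι) (x : ι) :
    f (flipAt σ x) - f σ ≤ osc f x := by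
  refine le_ciSup (f := fun σ => f (flipAt σ x) - f σ) ⟨2 * B, ?_⟩ σ
  rintro _ ⟨τ, rfl⟩
  linarith [abs_le.1 (hB τ), abs_le.1 (hB (flipAt τ x))]

lemma osc_le {x : ι} {c : ℝ} (h : ∀ σ, f (flipAt σ x) - f σ ≤ c) : osc f x ≤ c :=
  ciSup_le h

lemma osc_nonneg (hB : ∀ σ, |f σ| ≤ B) (x : ι) : 0 ≤ osc f x := by
  have h := sub_le_osc hB (fun _ => false) x
  have h' := sub_le_osc hB (flipAt (fun _ => false) x) x
  rw [flipAt_flipAt] at h'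
  linarith

lemma LocalOn.osc_eq_zero {Λ : Finset ι} (h : LocalOn Λ f) {x : ι} (hx : x ∉ Λ) :
    osc f x = 0 := by
  have : ∀ σ, f (flipAt σ x) - f σ = 0 := fun σ => sub_eq_zero.2 <|
    h _ _ fun _ hy => Function.update_of_ne (ne_of_mem_of_not_mem hy hx) _ _
  simp [osc, this]

lemma LocalOn.summable_osc {Λ : Finset ι} (h : LocalOn Λ f) : Summable (osc f) :=
  summable_of_ne_finset_zero fun _ hx => h.osc_eq_zero hx

lemma oscNorm1_const_mul {c : ℝ} (hc : 0 ≤ c) :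
    oscNorm1 (fun σ => c * f σ) = c * oscNorm1 f := by
  simp only [oscNorm1, osc, ← mul_sub, ← Real.mul_iSup_of_nonneg hc, tsum_mul_left]

end Oscillation

section Cubes

variable {d : ℕ}

lemma mem_cube {n : ℕ} {x : Site d} : x ∈ cube d n ↔ ∀ i, -(n : ℤ) ≤ x i ∧ x i ≤ n := by
  simp [cube, Fintype.mem_piFinset]

lemma add_mem_cube {m n : ℕ} {x y : Site d} (hx : x ∈ cube d m) (hy : y ∈ cube d n) :
    y + x ∈ cube d (m + n) := by
  rw [mem_cube] at hx hy ⊢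
  intro i
  have := hx i
  have := hy i
  simp only [Pi.add_apply, Nat.cast_add]
  constructor <;> linarith

lemma exists_subset_cube (Λ : Finset (Site d)) : ∃ M : ℕ, Λ ⊆ cube d M := by
  refine ⟨Λ.sup fun x => Finset.univ.sup fun i => (x i).natAbs, fun x hx => mem_cube.2 fun i => ?_⟩
  have : (x i).natAbs ≤ Λ.sup fun x => Finset.univ.sup fun i => (x i).natAbs :=
    (Finset.le_sup (f := fun i => (x i).natAbs) (Finset.mem_univ i)).trans
      (Finset.le_sup (f := fun x => Finset.univ.sup fun i => (x i).natAbs) hx)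
  exact abs_le.1 (Int.abs_eq_natAbs (x i) ▸ Int.ofNat_le.2 this)

lemma card_cube (n : ℕ) : (cube d n).card = (2 * n + 1) ^ d := by
  simp only [cube, Fintype.card_piFinset, Int.card_Icc, Finset.prod_const, Finset.card_univ,
    Fintype.card_fin]
  congr 1
  omega

lemma card_cube_add_le {m M : ℕ} (hM : M ≤ m) :
    (cube d (m + M)).card ≤ 2 ^ d * (cube d m).card := by
  rw [card_cube, card_cube, ← Nat.mul_pow]
  exact Nat.pow_le_pow_left (by omega) d

lemma measurable_shift (a : Site d) : Measurable (shift a) :=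
  measurable_pi_lambda _ fun x => measurable_pi_apply (x + a)

lemma shift_flipAt (a z : Site d) (σ : Config (Site d)) :
    shift a (flipAt σ z) = flipAt (shift a σ) (z - a) := by
  funext y
  by_cases h : y = z - a
  · subst h
    simp [shift, flipAt]
  · have : y + a ≠ z := fun h' => h (eq_sub_of_add_eq h')
    simp [shift, flipAt, Function.update_of_ne h, Function.update_of_ne this]

noncomputable def cubeSum (g : Config (Site d) → ℝ) (m : ℕ) (σ : Config (Site d)) : ℝ :=
  ∑ x ∈ cube d m, g (shift x σ)

variable {g G : Config (Site d) → ℝ} {B ε : ℝ}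

lemma LocalOn.cubeSum {M : ℕ} (hg : LocalOn (cube d M) g) (m : ℕ) :
    LocalOn (cube d (m + M)) (cubeSum g m) := fun _ _ hστ =>
  Finset.sum_congr rfl fun x hx => hg _ _ fun y hy => hστ (y + x) (add_mem_cube hx hy)

lemma abs_cubeSum_le (hB : ∀ σ, |g σ| ≤ B) (m : ℕ) (σ : Config (Site d)) :
    |cubeSum g m σ| ≤ (cube d m).card * B :=
  (Finset.abs_sum_le_sum_abs _ _).trans <| by
    simpa using Finset.sum_le_sum fun x (_ : x ∈ cube d m) => hB (shift x σ)

lemma abs_cubeSum_sub_le (h : ∀ σ, |g σ - G σ| ≤ ε) (m : ℕ) (σ : Config (Site d)) :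
    |cubeSum g m σ - cubeSum G m σ| ≤ (cube d m).card * ε := by
  rw [cubeSum, cubeSum, ← Finset.sum_sub_distrib]
  exact abs_cubeSum_le (g := fun σ => g σ - G σ) h m σ

lemma integral_cubeSum {ρ : Measure (Config (Site d))} [IsFiniteMeasure ρ]
    (hρ : TransInv ρ) (hg : Measurable g) (hB : ∀ σ, |g σ| ≤ B) (m : ℕ) :
    ∫ σ, cubeSum g m σ ∂ρ = (cube d m).card * ∫ σ, g σ ∂ρ := by
  have hshift : ∀ x, ∫ σ, g (shift x σ) ∂ρ = ∫ σ, g σ ∂ρ := fun x => by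
    conv_rhs => rw [← hρ x]
    rw [integral_map (measurable_shift x).aemeasurable hg.aestronglyMeasurable]
  simp only [cubeSum]
  rw [integral_finsetSum _ fun x _ => integrable_of_abs_le (f := fun σ => g (shift x σ))
    (hg.comp (measurable_shift x)) fun σ => hB (shift x σ)]
  simp [hshift]

lemma osc_cubeSum_le (hB : ∀ σ, |g σ| ≤ B) (m : ℕ) (z : Site d) :
    osc (cubeSum g m) z ≤ ∑ x ∈ cube d m, osc g (z - x) :=
  osc_le fun σ => by
    rw [cubeSum, cubeSum, ← Finset.sum_sub_distrib]
    refine Finset.sum_le_sum fun x _ => ?_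
    rw [shift_flipAt]
    exact sub_le_osc hB _ _

lemma oscNormSq_cubeSum_le {M : ℕ} (hg : LocalOn (cube d M) g) (m : ℕ) :
    oscNormSq (cubeSum g m) ≤ (cube d m).card * oscNorm1 g ^ 2 := by
  obtain ⟨B, hB⟩ := hg.exists_abs_le
  obtain ⟨B', hB'⟩ := (hg.cubeSum m).exists_abs_le
  set κ := oscNorm1 g
  have hle : ∀ (e : Site d ≃ Site d) (s : Finset (Site d)), ∑ z ∈ s, osc g (e z) ≤ κ :=
    fun e s => (Summable.sum_le_tsum s (fun _ _ => osc_nonneg hB _)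
      (e.summable_iff.2 hg.summable_osc)).trans_eq (e.tsum_eq (osc g))
  have hsq : ∀ z, osc (cubeSum g m) z ^ 2 ≤ κ * ∑ x ∈ cube d m, osc g (z - x) := fun z => by
    have h0 := osc_nonneg hB' z
    have h1 := osc_cubeSum_le hB m z
    have h2 := hle (Equiv.subLeft z) (cube d m)
    simp only [Equiv.subLeft_apply] at h2
    nlinarith
  rw [oscNormSq, tsum_eq_sum fun z hz => by rw [(hg.cubeSum m).osc_eq_zero hz]; ring]
  calc ∑ z ∈ cube d (m + M), osc (cubeSum g m) z ^ 2
      ≤ ∑ z ∈ cube d (m + M), κ * ∑ x ∈ cube d m, osc g (z - x) :=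
        Finset.sum_le_sum fun z _ => hsq z
    _ = κ * ∑ x ∈ cube d m, ∑ z ∈ cube d (m + M), osc g (Equiv.subRight x z) := by
      rw [← Finset.mul_sum, Finset.sum_comm]; rfl
    _ ≤ κ * ∑ _x ∈ cube d m, κ := by
      gcongr with x
      · exact tsum_nonneg fun _ => osc_nonneg hB _
      · exact hle _ _
    _ = (cube d m).card * κ ^ 2 := by rw [Finset.sum_const, nsmul_eq_mul]; ring

end Cubes

section Quasilocal

variable {ι : Type*}

/-- `f` is a uniform limit of local functions. -/
def Quasilocal (f : Config ι → ℝ) : Prop :=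
  ∀ ε > 0, ∃ Λ : Finset ι, ∀ σ τ : Config ι, (∀ x ∈ Λ, σ x = τ x) → |f σ - f τ| ≤ ε

lemma LocalOn.quasilocal {Λ : Finset ι} {f : Config ι → ℝ} (h : LocalOn Λ f) : Quasilocal f :=
  fun _ hε => ⟨Λ, fun σ τ hστ => by rw [h σ τ hστ, sub_self, abs_zero]; exact hε.le⟩

lemma Quasilocal.exists_abs_sub_truncate_le [DecidableEq ι] {f : Config ι → ℝ}
    (h : Quasilocal f) {ε : ℝ} (hε : 0 < ε) :
    ∃ Λ : Finset ι, ∀ σ, |f σ - f (truncate Λ σ)| ≤ ε := by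
  obtain ⟨Λ, hΛ⟩ := h ε hε
  exact ⟨Λ, fun σ => hΛ _ _ fun x hx => (truncate_apply_of_mem hx σ).symm⟩

end Quasilocal

lemma abs_prod_sub_prod_le {α : Type*} (s : Finset α) {a c : α → ℝ}
    (ha : ∀ x ∈ s, 0 ≤ a x ∧ a x ≤ 1) (hc : ∀ x ∈ s, 0 ≤ c x ∧ c x ≤ 1) :
    |∏ x ∈ s, a x - ∏ x ∈ s, c x| ≤ ∑ x ∈ s, |a x - c x| := by
  classical
  induction s using Finset.induction_on with
  | empty => simp
  | insert x s hx ih =>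
    rw [Finset.prod_insert hx, Finset.prod_insert hx, Finset.sum_insert hx]
    obtain ⟨ha0, ha1⟩ := ha x (Finset.mem_insert_self x s)
    have hcs : |∏ z ∈ s, c z| ≤ 1 := by
      rw [Finset.abs_prod]
      exact Finset.prod_le_one (fun _ _ => abs_nonneg _) fun z hz => by
        obtain ⟨h0, h1⟩ := hc z (Finset.mem_insert_of_mem hz)
        rwa [abs_of_nonneg h0]
    have ih' := ih (fun z hz => ha z (Finset.mem_insert_of_mem hz))
      fun z hz => hc z (Finset.mem_insert_of_mem hz)
    calc |a x * ∏ z ∈ s, a z - c x * ∏ z ∈ s, c z|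
        = |a x * (∏ z ∈ s, a z - ∏ z ∈ s, c z) + (a x - c x) * ∏ z ∈ s, c z| := by ring_nf
      _ ≤ |a x| * |∏ z ∈ s, a z - ∏ z ∈ s, c z| + |a x - c x| * |∏ z ∈ s, c z| := by
        rw [← abs_mul, ← abs_mul]; exact abs_add_le _ _
      _ ≤ 1 * ∑ z ∈ s, |a z - c z| + |a x - c x| * 1 := by
        rw [abs_of_nonneg ha0]
        gcongr
      _ = _ := by ring

section PCA

variable {d : ℕ} (P : PCA d)

noncomputable def PCA.kernel : Kernel (Config (Site d)) (Config (Site d)) := ⟨P.ker, P.ker_meas⟩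

instance : IsMarkovKernel P.kernel := ⟨P.ker_prob⟩

lemma abs_spin (b : Bool) : |spin b| = 1 := by
  cases b <;> simp [spin]

lemma pPlus_mem_Icc (x : Site d) (η : Config (Site d)) : pPlus P.r x η ∈ Set.Icc 0 1 := by
  have h := abs_le.1 ((abs_mul _ _).trans_le
    (by rw [abs_spin, one_mul]; exact P.hbound x η) : |spin (η x) * hfun P.r x η| ≤ 1)
  constructor <;> simp only [pPlus] <;> linarith [h.1, h.2]

noncomputable def siteProb (x : Site d) (η : Config (Site d)) (c : Bool) : ℝ :=
  if c then pPlus P.r x η else 1 - pPlus P.r x η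

lemma siteProb_mem_Icc (x : Site d) (η : Config (Site d)) (c : Bool) :
    siteProb P x η c ∈ Set.Icc 0 1 := by
  have := pPlus_mem_Icc P x η
  cases c <;> simp only [siteProb, Bool.false_eq_true, if_true, if_false, Set.mem_Icc] at this ⊢ <;>
    constructor <;> linarith [this.1, this.2]

lemma abs_siteProb_sub (x : Site d) (η η' : Config (Site d)) (c : Bool) :
    |siteProb P x η c - siteProb P x η' c| = |pPlus P.r x η - pPlus P.r x η'| := by
  cases c
  · simp only [siteProb, Bool.false_eq_true, if_false]
    rw [← abs_neg]
    ring_nf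
  · simp [siteProb]

lemma kernel_cyl_toReal (η : Config (Site d)) (Λ : Finset (Site d)) (b : Site d → Bool) :
    (P.kernel η (cyl Λ b)).toReal = ∏ x ∈ Λ, siteProb P x η (b x) := by
  have h0 : ∀ x ∈ Λ, 0 ≤ siteProb P x η (b x) := fun x _ => (siteProb_mem_Icc P x η _).1
  rw [PCA.kernel, Kernel.coe_mk, P.ker_marginal]
  change (∏ x ∈ Λ, ENNReal.ofReal (siteProb P x η (b x))).toReal = _
  rw [← ENNReal.ofReal_prod_of_nonneg h0, ENNReal.toReal_ofReal (Finset.prod_nonneg h0)]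

lemma kernelOp_eq_sum_of_localOn {Λ : Finset (Site d)} {f : Config (Site d) → ℝ}
    (h : LocalOn Λ f) (η : Config (Site d)) :
    kernelOp P.kernel f η = ∑ b : Λ → Bool,
      f (extendByFalse Λ b) * ∏ x ∈ Λ, siteProb P x η (extendByFalse Λ b x) := by
  simp only [kernelOp, h.integral_eq_sum (P.kernel η), kernel_cyl_toReal]

lemma abs_kernelOp_sub_le_of_localOn {Λ : Finset (Site d)} {f : Config (Site d) → ℝ}
    (h : LocalOn Λ f) {η η' : Config (Site d)} {δ : ℝ}
    (hδ : ∀ x ∈ Λ, |pPlus P.r x η - pPlus P.r x η'| ≤ δ) :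
    |kernelOp P.kernel f η - kernelOp P.kernel f η'| ≤
      (∑ b : Λ → Bool, |f (extendByFalse Λ b)|) * (Λ.card * δ) := by
  rw [kernelOp_eq_sum_of_localOn P h, kernelOp_eq_sum_of_localOn P h, ← Finset.sum_sub_distrib,
    Finset.sum_mul]
  refine (Finset.abs_sum_le_sum_abs _ _).trans (Finset.sum_le_sum fun b _ => ?_)
  rw [← mul_sub, abs_mul]
  refine mul_le_mul_of_nonneg_left ?_ (abs_nonneg _)
  calc _ ≤ ∑ x ∈ Λ,
        |siteProb P x η (extendByFalse Λ b x) - siteProb P x η' (extendByFalse Λ b x)| :=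
        abs_prod_sub_prod_le Λ (fun x _ => siteProb_mem_Icc P x η _)
          fun x _ => siteProb_mem_Icc P x η' _
    _ ≤ ∑ _x ∈ Λ, δ :=
        Finset.sum_le_sum fun x hx => (abs_siteProb_sub P x η η' _).trans_le (hδ x hx)
    _ = Λ.card * δ := by rw [Finset.sum_const, nsmul_eq_mul]

lemma abs_prod_spin (A : Finset (Site d)) (x : Site d) (η : Config (Site d)) :
    |∏ y ∈ A, spin (η (y + x))| = 1 := by
  simp [Finset.abs_prod, abs_spin]

lemma summable_hfun_term (x : Site d) (η : Config (Site d)) :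
    Summable fun A : Finset (Site d) => P.r A * ∏ y ∈ A, spin (η (y + x)) :=
  .of_abs <| P.summable_r.congr fun A => by rw [abs_mul, abs_prod_spin, mul_one]

lemma exists_abs_hfun_sub_le {δ : ℝ} (hδ : 0 < δ) :
    ∃ R : ℕ, ∀ (x : Site d) (η η' : Config (Site d)), (∀ y ∈ cube d R, η (y + x) = η' (y + x)) →
      |hfun P.r x η - hfun P.r x η'| ≤ δ := by
  obtain ⟨T, hT⟩ := ((tendsto_order.1 (tendsto_tsum_compl_atTop_zero fun A => |P.r A|)).2
    (δ / 2) (by positivity)).exists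
  obtain ⟨R, hR⟩ := exists_subset_cube (T.biUnion id)
  refine ⟨R, fun x η η' hηη' => ?_⟩
  set F : Finset (Site d) → ℝ := fun A =>
    P.r A * ∏ y ∈ A, spin (η (y + x)) - P.r A * ∏ y ∈ A, spin (η' (y + x))
  have hFT : Function.support F ⊆ {A | A ∉ T} := fun A hA hAT => hA <| by
    simp only [F]
    rw [Finset.prod_congr rfl fun y hy => by rw [hηη' y (hR (Finset.mem_biUnion.2 ⟨A, hAT, hy⟩))],
      sub_self]
  have hF : ∀ A, ‖F A‖ ≤ 2 * |P.r A| := fun A => by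
    simp only [F]
    rw [Real.norm_eq_abs, ← mul_sub, abs_mul, mul_comm]
    gcongr
    linarith [abs_sub _ _ |>.trans_eq (by rw [abs_prod_spin, abs_prod_spin, one_add_one_eq_two] :
      |∏ y ∈ A, spin (η (y + x))| + |∏ y ∈ A, spin (η' (y + x))| = 2)]
  rw [hfun, hfun, ← (summable_hfun_term P x η).tsum_sub (summable_hfun_term P x η'),
    ← tsum_subtype_eq_of_support_subset hFT]
  have : |∑' A : {A // A ∉ T}, F A| ≤ 2 * ∑' A : {A // A ∉ T}, |P.r A| :=
    tsum_of_norm_bounded (f := fun A : {A // A ∉ T} => F A)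
      ((P.summable_r.subtype {A | A ∉ T}).hasSum.mul_left 2) fun A => hF A.1
  exact this.trans (by linarith [hT])

lemma exists_abs_pPlus_sub_le {δ : ℝ} (hδ : 0 < δ) :
    ∃ R : ℕ, ∀ (x : Site d) (η η' : Config (Site d)), (∀ y ∈ cube d R, η (y + x) = η' (y + x)) →
      |pPlus P.r x η - pPlus P.r x η'| ≤ δ := by
  obtain ⟨R, hR⟩ := exists_abs_hfun_sub_le P (by positivity : 0 < 2 * δ)
  refine ⟨R, fun x η η' hηη' => ?_⟩
  have hx : η x = η' x := by simpa using hηη' 0 (mem_cube.2 fun _ => by simp)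
  rw [pPlus, pPlus, hx, ← sub_div, add_sub_add_left_eq_sub, ← mul_sub, abs_div, abs_mul,
    abs_spin, one_mul, abs_two]
  linarith [hR x η η' hηη']

lemma LocalOn.quasilocal_kernelOp {Λ : Finset (Site d)} {f : Config (Site d) → ℝ}
    (h : LocalOn Λ f) : Quasilocal (kernelOp P.kernel f) := by
  intro ε hε
  set K := (∑ b : Λ → Bool, |f (extendByFalse Λ b)|) * Λ.card
  have hK : 0 ≤ K := by positivity
  obtain ⟨R, hR⟩ := exists_abs_pPlus_sub_le P (by positivity : 0 < ε / (K + 1))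
  refine ⟨Finset.image₂ (· + ·) (cube d R) Λ, fun σ τ hστ => ?_⟩
  have := abs_kernelOp_sub_le_of_localOn P h fun x hx => hR x σ τ fun y hy =>
    hστ _ (Finset.mem_image₂_of_mem hy hx)
  calc _ ≤ K * (ε / (K + 1)) := by rw [mul_assoc]; exact this
    _ ≤ ε := by
      rw [mul_div_assoc', div_le_iff₀ (by positivity)]
      nlinarith

variable {f g : Config (Site d) → ℝ} {B : ℝ}

lemma Quasilocal.kernelOp (hf : Quasilocal f) (hm : Measurable f) (hB : ∀ σ, |f σ| ≤ B) :
    Quasilocal (_root_.kernelOp P.kernel f) := by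
  intro ε hε
  obtain ⟨Λ, hΛ⟩ := hf.exists_abs_sub_truncate_le (by positivity : 0 < ε / 3)
  have hloc := localOn_comp_truncate Λ f
  obtain ⟨Λ', hΛ'⟩ := hloc.quasilocal_kernelOp P (ε / 3) (by positivity)
  have happrox := abs_kernelOp_sub_le (κ := P.kernel) hm hB hloc.measurable hΛ
  refine ⟨Λ', fun σ τ hστ => ?_⟩
  set Pf := _root_.kernelOp P.kernel f
  set PG := _root_.kernelOp P.kernel (f ∘ truncate Λ)
  linarith [abs_sub_le (Pf σ) (PG σ) (Pf τ), abs_sub_le (PG σ) (PG τ) (Pf τ),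
    abs_sub_comm (PG τ) (Pf τ), happrox σ, happrox τ, hΛ' σ τ hστ]

lemma LocalOn.quasilocal_kernelOp_iterate {Λ : Finset (Site d)} (hg : LocalOn Λ g) (n : ℕ) :
    Quasilocal ((kernelOp P.kernel)^[n] g) := by
  obtain ⟨B, hB⟩ := hg.exists_abs_le
  induction n with
  | zero => exact hg.quasilocal
  | succ n ih =>
    rw [Function.iterate_succ_apply']
    exact ih.kernelOp P (measurable_kernelOp_iterate hg.measurable n)
      (abs_kernelOp_iterate_le hB n)

lemma hfun_shift (x a : Site d) (η : Config (Site d)) :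
    hfun P.r x (shift a η) = hfun P.r (x + a) η := by
  simp only [hfun, shift, add_assoc]

lemma preimage_shift_cyl (a : Site d) (Λ : Finset (Site d)) (b : Site d → Bool) :
    shift a ⁻¹' cyl Λ b = cyl (Λ.image (· + a)) fun y => b (y - a) := by
  ext σ
  simp only [Set.mem_preimage, cyl, Set.mem_ofPred_eq, Finset.forall_mem_image, shift,
    add_sub_cancel_right]

lemma map_shift_kernel (a : Site d) (η : Config (Site d)) :
    (P.kernel η).map (shift a) = P.kernel (shift a η) := by
  have := Measure.isProbabilityMeasure_map (μ := P.kernel η) (measurable_shift a).aemeasurable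
  refine measure_ext_cyl fun Λ b => ?_
  rw [Measure.map_apply (measurable_shift a) (measurableSet_cyl _ _), preimage_shift_cyl]
  simp only [PCA.kernel, Kernel.coe_mk, P.ker_marginal]
  rw [Finset.prod_image fun _ _ _ _ h => add_right_cancel h]
  refine Finset.prod_congr rfl fun x _ => ?_
  simp only [add_sub_cancel_right, pPlus, hfun_shift, shift]

lemma TransInv.comp_kernel {μ : Measure (Config (Site d))} (hμ : TransInv μ) :
    TransInv (P.kernel ∘ₘ μ) := by
  intro a
  ext s hs
  rw [Measure.map_apply (measurable_shift a) hs,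
    Measure.bind_apply (measurable_shift a hs) P.kernel.aemeasurable,
    Measure.bind_apply hs P.kernel.aemeasurable]
  simp_rw [← Measure.map_apply (measurable_shift a) hs, map_shift_kernel]
  conv_rhs => rw [← hμ a]
  rw [lintegral_map (P.kernel.measurable_coe hs) (measurable_shift a)]

instance (μ : Measure (Config (Site d))) [IsProbabilityMeasure μ] (n : ℕ) :
    IsProbabilityMeasure ((Pmeas P)^[n] μ) :=
  isProbabilityMeasure_iterate_comp (κ := P.kernel) μ n

lemma TransInv.Pmeas_iterate {μ : Measure (Config (Site d))} (hμ : TransInv μ) (n : ℕ) :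
    TransInv ((Pmeas P)^[n] μ) := by
  induction n with
  | zero => exact hμ
  | succ n ih => rw [Function.iterate_succ_apply']; exact ih.comp_kernel P

lemma kernelOp_iterate_comp_shift (hf : Measurable f) (a : Site d) (n : ℕ) (η : Config (Site d)) :
    (kernelOp P.kernel)^[n] (fun σ => f (shift a σ)) η = (kernelOp P.kernel)^[n] f (shift a η) := by
  induction n generalizing f with
  | zero => rfl
  | succ n ih =>
    have hstep : kernelOp P.kernel (fun σ => f (shift a σ)) =
        fun η => kernelOp P.kernel f (shift a η) := funext fun η => by
      rw [kernelOp, kernelOp, ← map_shift_kernel,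
        integral_map (measurable_shift a).aemeasurable hf.aestronglyMeasurable]
    simp only [Function.iterate_succ_apply, hstep]
    exact ih (measurable_kernelOp hf)

lemma kernelOp_iterate_cubeSum (hg : Measurable g) (hB : ∀ σ, |g σ| ≤ B) (m n : ℕ) :
    (kernelOp P.kernel)^[n] (cubeSum g m) = cubeSum ((kernelOp P.kernel)^[n] g) m := by
  rw [show cubeSum g m = fun σ => ∑ x ∈ cube d m, g (shift x σ) from rfl,
    kernelOp_iterate_finsetSum (g := fun x σ => g (shift x σ)) _
      (fun x => hg.comp (measurable_shift x)) (fun x σ => hB _)]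
  exact funext fun η => Finset.sum_congr rfl fun x _ => kernelOp_iterate_comp_shift P hg x n η

lemma exists_cubeSum_approx_kernelOp_iterate {Λ : Finset (Site d)} (hg : LocalOn Λ g)
    (n : ℕ) {θ : ℝ} (hθ : 0 < θ) :
    ∃ (M : ℕ) (G : Config (Site d) → ℝ), LocalOn (cube d M) G ∧ ∀ (m : ℕ) (σ : Config (Site d)),
      |(kernelOp P.kernel)^[n] (cubeSum g m) σ - cubeSum G m σ| ≤ (cube d m).card * θ := by
  obtain ⟨B, hB⟩ := hg.exists_abs_le
  obtain ⟨Λ₁, hΛ₁⟩ := (hg.quasilocal_kernelOp_iterate P n).exists_abs_sub_truncate_le hθ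
  obtain ⟨M, hM⟩ := exists_subset_cube Λ₁
  refine ⟨M, (kernelOp P.kernel)^[n] g ∘ truncate Λ₁, (localOn_comp_truncate Λ₁ _).mono hM,
    fun m σ => ?_⟩
  rw [kernelOp_iterate_cubeSum P hg.measurable hB]
  exact abs_cubeSum_sub_le hΛ₁ m σ

end PCA

section GaussianConcentration

lemma GCB.log_integral_exp_le {ι : Type*} [DecidableEq ι] {ν : Measure (Config ι)}
    [IsProbabilityMeasure ν] {C : ℝ} (h : GCB ν C) {Λ : Finset ι} {f : Config ι → ℝ}
    (hf : LocalOn Λ f) :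
    Real.log (∫ σ, Real.exp (f σ) ∂ν) ≤ ∫ σ, f σ ∂ν + C / 2 * oscNormSq f := by
  obtain ⟨B, hB⟩ := hf.exists_abs_le
  have hpos := integral_exp_pos (μ := ν)
    (integrable_exp_of_le hf.measurable fun σ => (le_abs_self _).trans (hB σ))
  have := h f ⟨Λ, hf⟩
  simp_rw [Real.exp_sub] at this
  rw [integral_div, Real.log_div hpos.ne' (Real.exp_ne_zero _), Real.log_exp] at this
  linarith

lemma exists_localOn_integral_lt {ι : Type*} [DecidableEq ι] {ν ν' : Measure (Config ι)}
    [IsProbabilityMeasure ν] [IsProbabilityMeasure ν'] (h : ν ≠ ν') :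
    ∃ (Λ : Finset ι) (g : Config ι → ℝ), LocalOn Λ g ∧ ∫ σ, g σ ∂ν' < ∫ σ, g σ ∂ν := by
  obtain ⟨Λ, b, hb⟩ : ∃ (Λ : Finset ι) (b : Λ → Bool),
      ν (cyl Λ (extendByFalse Λ b)) ≠ ν' (cyl Λ (extendByFalse Λ b)) := by
    by_contra! h'
    exact h (measure_ext_cyl h')
  set S := cyl Λ (extendByFalse Λ b)
  have hS : LocalOn Λ (S.indicator 1) := fun σ τ hστ => by
    have hmem : σ ∈ S ↔ τ ∈ S := by
      rw [mem_cyl_extendByFalse, mem_cyl_extendByFalse, show Λ.restrict σ = Λ.restrict τ from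
        funext fun x => hστ x x.2]
    by_cases hσ : σ ∈ S
    · rw [Set.indicator_of_mem hσ, Set.indicator_of_mem (hmem.1 hσ), Pi.one_apply, Pi.one_apply]
    · rw [Set.indicator_of_notMem hσ, Set.indicator_of_notMem (mt hmem.2 hσ)]
  have hreal : ν.real S ≠ ν'.real S := fun h' =>
    hb ((ENNReal.toReal_eq_toReal_iff' (measure_ne_top _ _) (measure_ne_top _ _)).1 h')
  rcases hreal.lt_or_gt with hlt | hlt
  · refine ⟨Λ, fun σ => -S.indicator 1 σ, fun σ τ hστ => congrArg Neg.neg (hS σ τ hστ), ?_⟩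
    rw [integral_neg, integral_neg, integral_indicator_one (measurableSet_cyl _ _),
      integral_indicator_one (measurableSet_cyl _ _)]
    exact neg_lt_neg hlt
  · refine ⟨Λ, S.indicator 1, hS, ?_⟩
    rwa [integral_indicator_one (measurableSet_cyl _ _),
      integral_indicator_one (measurableSet_cyl _ _)]

end GaussianConcentration

section EntropyGrowth

variable {d : ℕ}

lemma donskerVaradhan_cubeSum_ge {ν ν' : Measure (Config (Site d))} [IsProbabilityMeasure ν]
    [IsProbabilityMeasure ν'] (hν : TransInv ν) (hν' : TransInv ν') {C : ℝ} (hC : 0 ≤ C)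
    (hgcb : GCB ν' C) {M : ℕ} {h : Config (Site d) → ℝ} (hh : LocalOn (cube d M) h) (m : ℕ) :
    (cube d m).card * (∫ σ, h σ ∂ν - ∫ σ, h σ ∂ν' - C / 2 * oscNorm1 h ^ 2) ≤
      donskerVaradhan ν ν' (cubeSum h m) := by
  obtain ⟨B, hB⟩ := hh.exists_abs_le
  have hgauss := hgcb.log_integral_exp_le (hh.cubeSum m)
  have hosc := mul_le_mul_of_nonneg_left (oscNormSq_cubeSum_le hh m) (by positivity : 0 ≤ C / 2)
  rw [donskerVaradhan, integral_cubeSum hν hh.measurable hB,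
    integral_cubeSum hν' hh.measurable hB] at *
  linarith

lemma exists_relEntVol_ge (P : PCA d) {μ μ' : Measure (Config (Site d))} [IsProbabilityMeasure μ]
    [IsProbabilityMeasure μ'] (hμ : TransInv μ) (hμ' : TransInv μ') {n : ℕ} {C : ℝ} (hC : 0 ≤ C)
    (hgcb : GCB ((Pmeas P)^[n] μ') C) {Λ : Finset (Site d)} {g : Config (Site d) → ℝ}
    (hg : LocalOn Λ g) (hlt : ∫ σ, g σ ∂((Pmeas P)^[n] μ') < ∫ σ, g σ ∂((Pmeas P)^[n] μ)) :
    ∃ c > 0, ∃ M : ℕ, ∀ m : ℕ,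
      ENNReal.ofReal (c * (cube d m).card) ≤ relEntVol μ μ' (cube d (m + M)) := by
  set Δ := ∫ σ, g σ ∂((Pmeas P)^[n] μ) - ∫ σ, g σ ∂((Pmeas P)^[n] μ')
  have hΔ : 0 < Δ := sub_pos.2 hlt
  obtain ⟨M₀, hM₀⟩ := exists_subset_cube Λ
  set κ := oscNorm1 g
  -- `λ` is small enough that the Gaussian term `C λ² κ² / 2` costs at most `λ Δ / 4`
  set lam := Δ / (2 * (C * κ ^ 2 + 1))
  have hlam : 0 < lam := by positivity
  have hlamκ : lam * (C * κ ^ 2) ≤ Δ / 2 := by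
    rw [div_mul_eq_mul_div, div_le_div_iff₀ (by positivity) two_pos]
    nlinarith [mul_nonneg hC (sq_nonneg κ)]
  set h : Config (Site d) → ℝ := fun σ => lam * g σ
  have hh : LocalOn (cube d M₀) h := fun σ τ hστ => by simp only [h, hg.mono hM₀ σ τ hστ]
  obtain ⟨M, G, hG, happrox⟩ :=
    exists_cubeSum_approx_kernelOp_iterate P hh n (by positivity : 0 < lam * Δ / 8)
  refine ⟨lam * Δ / 2, by positivity, M, fun m => ?_⟩
  obtain ⟨B, hB⟩ := (hh.cubeSum m).exists_abs_le
  have hpull : donskerVaradhan ((Pmeas P)^[n] μ) ((Pmeas P)^[n] μ') (cubeSum h m) -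
      2 * ((cube d m).card * (lam * Δ / 8)) ≤ donskerVaradhan μ μ' (cubeSum G m) :=
    donskerVaradhan_iterate_comp_le (κ := P.kernel) (hh.cubeSum m).measurable hB
      (hG.cubeSum m).measurable (happrox m)
  have hpush := donskerVaradhan_cubeSum_ge (hμ.Pmeas_iterate P n) (hμ'.Pmeas_iterate P n) hC hgcb
    hh m
  rw [integral_const_mul, integral_const_mul, oscNorm1_const_mul hlam.le] at hpush
  have hvol : (0 : ℝ) ≤ (cube d m).card := Nat.cast_nonneg _
  refine le_trans (ENNReal.ofReal_le_ofReal ?_)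
    (ofReal_donskerVaradhan_le_relEntVol μ μ' (hG.cubeSum m))
  nlinarith [mul_le_mul_of_nonneg_left hlamκ (mul_nonneg hvol hlam.le)]

lemma not_tendsto_density_zero_of_linear_growth {S : Finset (Site d) → ℝ≥0∞} {c : ℝ}
    (hc : 0 < c) {M : ℕ} (hS : ∀ m : ℕ, ENNReal.ofReal (c * (cube d m).card) ≤ S (cube d (m + M))) :
    ¬ Tendsto (fun n : ℕ => S (cube d n) / ((cube d n).card : ℝ≥0∞)) atTop (nhds 0) := by
  intro hlim
  have hpos : (0 : ℝ≥0∞) < ENNReal.ofReal (c / 2 ^ d) := ENNReal.ofReal_pos.2 (by positivity)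
  obtain ⟨m, hm, hMm⟩ := (((hlim.comp (tendsto_add_atTop_nat M)).eventually
    (eventually_lt_nhds hpos)).and (eventually_ge_atTop M)).exists
  refine hm.not_ge ?_
  have hcard : ((cube d (m + M)).card : ℝ) ≤ 2 ^ d * (cube d m).card := by
    exact_mod_cast card_cube_add_le hMm
  rw [Function.comp_apply, ENNReal.le_div_iff_mul_le (Or.inl (by simp [card_cube]))
    (Or.inl (ENNReal.natCast_ne_top _)), ← ENNReal.ofReal_natCast,
    ← ENNReal.ofReal_mul (by positivity)]
  refine le_trans (ENNReal.ofReal_le_ofReal ?_) (hS m)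
  rw [div_mul_eq_mul_div, div_le_iff₀ (by positivity)]
  nlinarith

end EntropyGrowth

/-- if `P` is non-degenerate and `μ ≠ μ'` are translation-invariant
probability measures with zero relative entropy density `s(μ|μ') = 0`, then for
every `n`, `μ'Pⁿ` does not satisfy `GCB(C)` for any `C ≥ 0`. -/
theorem no_gcb_from_zero_entropy {d : ℕ} (P : PCA d)
    (hnd : ∀ μ ν : Measure (Config (Site d)),
      IsProbabilityMeasure μ → IsProbabilityMeasure ν → μ ≠ ν →
      ∀ n : ℕ, (Pmeas P)^[n] μ ≠ (Pmeas P)^[n] ν)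
    (μ μ' : Measure (Config (Site d))) [IsProbabilityMeasure μ]
    [IsProbabilityMeasure μ'] (hTI : TransInv μ) (hTI' : TransInv μ')
    (hne : μ ≠ μ')
    (hent : Tendsto
      (fun n : ℕ => relEntVol μ μ' (cube d n) / ((cube d n).card : ℝ≥0∞))
      atTop (nhds 0)) :
    ∀ (n : ℕ) (C : ℝ), 0 ≤ C → ¬ GCB ((Pmeas P)^[n] μ') C := by
  intro n C hC hgcb
  obtain ⟨Λ, g, hg, hlt⟩ := exists_localOn_integral_lt (hnd μ μ' ‹_› ‹_› hne n)
  obtain ⟨c, hc, M, hgrowth⟩ := exists_relEntVol_ge P hTI hTI' hC hgcb hg hlt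
  exact not_tendsto_density_zero_of_linear_growth hc hgrowth hent
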